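/- arXiv:nlin/0606059 — 2 statements merged into one kernel-verified Lean document; each statement's English description precedes it below -/
import Mathlib

section
/- Let τ satisfy Fay-like identities (A) and (C). Then for all s, x, y and all nonzero complex numbers λ, μ, the two 'transfer coefficient' ratios agree: (𝗌w⁺(s,x,y;λ) − (1−λ/μ)·𝗌w⁺(s, x−ℏ[μ⁻¹], y; λ)) / (λ·𝗌w⁺(s+ℏ, x, y; λ)) = (𝘄⁻(s,x,y;λ) − 𝘄⁻(s, x−ℏ[μ⁻¹], y; λ)) / (λ·𝘄⁻(s+ℏ, x, y; λ)), and their common value is v⁺(s,x,y;μ), which is independent of λ. -/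
noncomputable section

/-- `shift ℏ x μ` is the sequence `x − ℏ[μ]`, where `[μ]ₙ = μⁿ/n`. -/
def shift (h : ℂ) (x : ℕ+ → ℂ) (μ : ℂ) : ℕ+ → ℂ :=
  fun n => x n - h * (μ ^ (n : ℕ) / (n : ℂ))

/-- Fay-like identity (A). -/
def FayA (h : ℂ) (τ : ℂ → (ℕ+ → ℂ) → (ℕ+ → ℂ) → ℂ) : Prop :=
  ∀ (s : ℂ) (x y : ℕ+ → ℂ) (μ₁ μ₂ : ℂ), μ₁ ≠ 0 → μ₂ ≠ 0 →
    μ₂ * τ s (shift h x μ₁⁻¹) y * τ (s + h) (shift h x μ₂⁻¹) y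
      - μ₁ * τ s (shift h x μ₂⁻¹) y * τ (s + h) (shift h x μ₁⁻¹) y
    = (μ₂ - μ₁) * τ (s + h) x y * τ s (shift h (shift h x μ₁⁻¹) μ₂⁻¹) y

/-- Fay-like identity (B). -/
def FayB (h : ℂ) (τ : ℂ → (ℕ+ → ℂ) → (ℕ+ → ℂ) → ℂ) : Prop :=
  ∀ (s : ℂ) (x y : ℕ+ → ℂ) (ν₁ ν₂ : ℂ), ν₁ ≠ 0 → ν₂ ≠ 0 →
    (ν₁ - ν₂) * τ s x y * τ (s + h) x (shift h (shift h y ν₁) ν₂)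
    = ν₁ * τ (s + h) x (shift h y ν₁) * τ s x (shift h y ν₂)
      - ν₂ * τ (s + h) x (shift h y ν₂) * τ s x (shift h y ν₁)

/-- Fay-like identity (C). -/
def FayC (h : ℂ) (τ : ℂ → (ℕ+ → ℂ) → (ℕ+ → ℂ) → ℂ) : Prop :=
  ∀ (s : ℂ) (x y : ℕ+ → ℂ) (μ ν : ℂ), μ ≠ 0 → ν ≠ 0 →
    μ * (τ s (shift h x μ⁻¹) y * τ s x (shift h y ν)
          - τ s x y * τ s (shift h x μ⁻¹) (shift h y ν))
    = ν * τ (s + h) x (shift h y ν) * τ (s - h) (shift h x μ⁻¹) y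

/-- `𝗌w⁺(s,x,y;λ) = τ(s; x−ℏ[λ⁻¹], y)/τ(s+ℏ; x, y)`. -/
def swp (h : ℂ) (τ : ℂ → (ℕ+ → ℂ) → (ℕ+ → ℂ) → ℂ)
    (s : ℂ) (x y : ℕ+ → ℂ) (lam : ℂ) : ℂ :=
  τ s (shift h x lam⁻¹) y / τ (s + h) x y

/-- `𝘄⁻(s,x,y;λ) = τ(s+ℏ; x, y−ℏ[λ])/τ(s+ℏ; x, y)`. -/
def swm (h : ℂ) (τ : ℂ → (ℕ+ → ℂ) → (ℕ+ → ℂ) → ℂ)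
    (s : ℂ) (x y : ℕ+ → ℂ) (lam : ℂ) : ℂ :=
  τ (s + h) x (shift h y lam) / τ (s + h) x y

/-- `w̃⁺(s,x,y;λ) = τ(s; x−ℏ[λ⁻¹], y)/τ(s; x, y)`. -/
def wtp (h : ℂ) (τ : ℂ → (ℕ+ → ℂ) → (ℕ+ → ℂ) → ℂ)
    (s : ℂ) (x y : ℕ+ → ℂ) (lam : ℂ) : ℂ :=
  τ s (shift h x lam⁻¹) y / τ s x y

/-- `w̃⁻(s,x,y;λ) = τ(s+ℏ; x, y−ℏ[λ])/τ(s; x, y)`. -/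
def wtm (h : ℂ) (τ : ℂ → (ℕ+ → ℂ) → (ℕ+ → ℂ) → ℂ)
    (s : ℂ) (x y : ℕ+ → ℂ) (lam : ℂ) : ℂ :=
  τ (s + h) x (shift h y lam) / τ s x y

/-- `v⁺(s,x,y;μ)`. -/
def vp (h : ℂ) (τ : ℂ → (ℕ+ → ℂ) → (ℕ+ → ℂ) → ℂ)
    (s : ℂ) (x y : ℕ+ → ℂ) (μ : ℂ) : ℂ :=
  μ⁻¹ * τ s (shift h x μ⁻¹) y * τ (s + 2 * h) x y
    / (τ (s + h) x y * τ (s + h) (shift h x μ⁻¹) y)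

/-- `v⁻(s,x,y;ν)`. -/
def vm (h : ℂ) (τ : ℂ → (ℕ+ → ℂ) → (ℕ+ → ℂ) → ℂ)
    (s : ℂ) (x y : ℕ+ → ℂ) (ν : ℂ) : ℂ :=
  ν * τ (s + h) x (shift h y ν) * τ (s - h) x y
    / (τ s x y * τ s x (shift h y ν))

/-!
Clearing denominators, each of the two transfer ratios equals `v⁺(μ)` by a single Fay identity:
the `𝗌w⁺` ratio is identity (A) with `(μ₁, μ₂) = (λ, μ)`, and the `𝘄⁻` ratio is identity (C)
at `s + ℏ` with `(μ, ν) = (μ, λ)`.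
-/

lemma shift_shift_comm (h : ℂ) (x : ℕ+ → ℂ) (μ ν : ℂ) :
    shift h (shift h x μ) ν = shift h (shift h x ν) μ := by
  funext n
  simp only [shift]
  ring

section

variable {h : ℂ} {τ : ℂ → (ℕ+ → ℂ) → (ℕ+ → ℂ) → ℂ} {s lam μ : ℂ} {x y : ℕ+ → ℂ}

lemma FayA.swp_transfer_eq_vp (hA : FayA h τ) (hτ : ∀ s x y, τ s x y ≠ 0)
    (hlam : lam ≠ 0) (hμ : μ ≠ 0) :
    (swp h τ s x y lam - (1 - lam / μ) * swp h τ s (shift h x μ⁻¹) y lam)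
        / (lam * swp h τ (s + h) x y lam)
      = vp h τ s x y μ := by
  have hfay := hA s x y lam μ hlam hμ
  rw [shift_shift_comm] at hfay
  have h_add : s + h + h = s + 2 * h := by ring
  unfold swp vp
  rw [h_add]
  have := hτ s (shift h x lam⁻¹) y
  have := hτ (s + h) x y
  have := hτ (s + h) (shift h x μ⁻¹) y
  have := hτ (s + h) (shift h x lam⁻¹) y
  have := hτ (s + 2 * h) x y
  -- Opaque names keep `field_simp` from rewriting `μ⁻¹` inside the arguments of `τ`.
  generalize τ s (shift h x lam⁻¹) y = a at *
  generalize τ (s + h) x y = b at *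
  generalize τ (s + h) (shift h x μ⁻¹) y = c at *
  generalize τ (s + h) (shift h x lam⁻¹) y = d at *
  generalize τ s (shift h (shift h x μ⁻¹) lam⁻¹) y = e at *
  generalize τ s (shift h x μ⁻¹) y = f at *
  generalize τ (s + 2 * h) x y = g at *
  field_simp
  linear_combination hfay

lemma FayC.swm_transfer_eq_vp (hC : FayC h τ) (hτ : ∀ s x y, τ s x y ≠ 0)
    (hlam : lam ≠ 0) (hμ : μ ≠ 0) :
    (swm h τ s x y lam - swm h τ s (shift h x μ⁻¹) y lam)
        / (lam * swm h τ (s + h) x y lam)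
      = vp h τ s x y μ := by
  have hfay := hC (s + h) x y μ lam hμ hlam
  have h_sub : s + h - h = s := by ring
  have h_add : s + h + h = s + 2 * h := by ring
  rw [h_sub, h_add] at hfay
  unfold swm vp
  rw [h_add]
  have := hτ (s + h) x y
  have := hτ (s + h) (shift h x μ⁻¹) y
  have := hτ (s + h) x (shift h y lam)
  have := hτ (s + 2 * h) x (shift h y lam)
  have := hτ (s + 2 * h) x y
  generalize τ (s + h) x y = a at *
  generalize τ (s + h) (shift h x μ⁻¹) y = b at *
  generalize τ (s + h) x (shift h y lam) = c at *
  generalize τ (s + 2 * h) x (shift h y lam) = d at *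
  generalize τ (s + h) (shift h x μ⁻¹) (shift h y lam) = e at *
  generalize τ s (shift h x μ⁻¹) y = f at *
  generalize τ (s + 2 * h) x y = g at *
  field_simp
  linear_combination hfay

end

theorem transfer_coefficient_plus_general
    (h : ℂ)
    (τ : ℂ → (ℕ+ → ℂ) → (ℕ+ → ℂ) → ℂ) (hτ : ∀ s x y, τ s x y ≠ 0)
    (hA : FayA h τ) (hC : FayC h τ)
    (s : ℂ) (x y : ℕ+ → ℂ) (lam μ : ℂ) (hlam : lam ≠ 0) (hμ : μ ≠ 0) :
    ((swp h τ s x y lam - (1 - lam / μ) * swp h τ s (shift h x μ⁻¹) y lam)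
        / (lam * swp h τ (s + h) x y lam)
      = (swm h τ s x y lam - swm h τ s (shift h x μ⁻¹) y lam)
        / (lam * swm h τ (s + h) x y lam))
    ∧ ((swp h τ s x y lam - (1 - lam / μ) * swp h τ s (shift h x μ⁻¹) y lam)
        / (lam * swp h τ (s + h) x y lam)
      = vp h τ s x y μ) := by
  have hplus := hA.swp_transfer_eq_vp hτ hlam hμ (s := s) (x := x) (y := y)
  have hminus := hC.swm_transfer_eq_vp hτ hlam hμ (s := s) (x := x) (y := y)
  exact ⟨hplus.trans hminus.symm, hplus⟩

/-- The two transfer-coefficient ratios for `𝗌w⁺` and `𝘄⁻` agree and equal `v⁺(μ)`. -/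
theorem transfer_coefficient_plus
    (h : ℂ) (hh : h ≠ 0)
    (τ : ℂ → (ℕ+ → ℂ) → (ℕ+ → ℂ) → ℂ) (hτ : ∀ s x y, τ s x y ≠ 0)
    (hA : FayA h τ) (hC : FayC h τ)
    (s : ℂ) (x y : ℕ+ → ℂ) (lam μ : ℂ) (hlam : lam ≠ 0) (hμ : μ ≠ 0) :
    ((swp h τ s x y lam - (1 - lam / μ) * swp h τ s (shift h x μ⁻¹) y lam)
        / (lam * swp h τ (s + h) x y lam)
      = (swm h τ s x y lam - swm h τ s (shift h x μ⁻¹) y lam)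
        / (lam * swm h τ (s + h) x y lam))
    ∧ ((swp h τ s x y lam - (1 - lam / μ) * swp h τ s (shift h x μ⁻¹) y lam)
        / (lam * swp h τ (s + h) x y lam)
      = vp h τ s x y μ) :=
  transfer_coefficient_plus_general h τ hτ hA hC s x y lam μ hlam hμ
end
end

section
/- Let τ satisfy Fay-like identities (B) and (C). Then for all s, x, y and all nonzero complex numbers λ, ν, the two 'transfer coefficient' ratios agree: (w̃⁺(s,x,y;λ) − w̃⁺(s, x, y−ℏ[ν]; λ)) / (λ⁻¹·w̃⁺(s−ℏ, x, y; λ)) = (w̃⁻(s,x,y;λ) − (1−ν/λ)·w̃⁻(s, x, y−ℏ[ν]; λ)) / (λ⁻¹·w̃⁻(s−ℏ, x, y; λ)), and their common value is v⁻(s,x,y;ν), which is independent of λ. -/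
noncomputable section

/- Clearing denominators, the `w̃⁺` ratio becomes Fay identity (C) with `μ = λ` and
the `w̃⁻` ratio becomes Fay identity (B) with `(ν₁, ν₂) = (λ, ν)`; in both cases the remaining
factor is exactly `v⁻(s,x,y;ν)`. -/

theorem shift_comm (h : ℂ) (y : ℕ+ → ℂ) (a b : ℂ) :
    shift h (shift h y a) b = shift h (shift h y b) a := by
  funext n
  simp only [shift]
  ring

theorem div_sub_div_div_inv_mul_div_eq {K : Type*} [Field K] {P Q T₁ T₂ D T₃ lam ν E : K}
    (hT₁ : T₁ ≠ 0) (hT₂ : T₂ ≠ 0) (hD : D ≠ 0)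
    (hrel : lam * (P * T₂ - T₁ * Q) = ν * E * D) :
    (P / T₁ - Q / T₂) / (lam⁻¹ * (D / T₃)) = ν * E * T₃ / (T₁ * T₂) := by
  field_simp
  linear_combination T₃ * hrel

section

variable {h : ℂ} {τ : ℂ → (ℕ+ → ℂ) → (ℕ+ → ℂ) → ℂ} {lam ν : ℂ}

theorem wtp_transfer_ratio_eq_vm (hτ : ∀ s x y, τ s x y ≠ 0) (hC : FayC h τ)
    (s : ℂ) (x y : ℕ+ → ℂ) (hlam : lam ≠ 0) (hν : ν ≠ 0) :
    (wtp h τ s x y lam - wtp h τ s x (shift h y ν) lam) / (lam⁻¹ * wtp h τ (s - h) x y lam)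
      = vm h τ s x y ν :=
  div_sub_div_div_inv_mul_div_eq (hτ _ _ _) (hτ _ _ _) (hτ _ _ _) <| by
    linear_combination hC s x y lam ν hlam hν

theorem wtm_transfer_ratio_eq_vm (hτ : ∀ s x y, τ s x y ≠ 0) (hB : FayB h τ)
    (s : ℂ) (x y : ℕ+ → ℂ) (hlam : lam ≠ 0) (hν : ν ≠ 0) :
    (wtm h τ s x y lam - (1 - ν / lam) * wtm h τ s x (shift h y ν) lam)
        / (lam⁻¹ * wtm h τ (s - h) x y lam)
      = vm h τ s x y ν := by
  rw [wtm, wtm, wtm, sub_add_cancel, ← mul_div_assoc]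
  refine div_sub_div_div_inv_mul_div_eq (hτ _ _ _) (hτ _ _ _) (hτ _ _ _) ?_
  have hB' := hB s x y lam ν hlam hν
  rw [shift_comm] at hB'
  field_simp
  linear_combination -hB'

end

theorem transfer_coefficient_minus_general
    (h : ℂ)
    (τ : ℂ → (ℕ+ → ℂ) → (ℕ+ → ℂ) → ℂ) (hτ : ∀ s x y, τ s x y ≠ 0)
    (hB : FayB h τ) (hC : FayC h τ)
    (s : ℂ) (x y : ℕ+ → ℂ) (lam ν : ℂ) (hlam : lam ≠ 0) (hν : ν ≠ 0) :
    ((wtp h τ s x y lam - wtp h τ s x (shift h y ν) lam)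
        / (lam⁻¹ * wtp h τ (s - h) x y lam)
      = (wtm h τ s x y lam - (1 - ν / lam) * wtm h τ s x (shift h y ν) lam)
        / (lam⁻¹ * wtm h τ (s - h) x y lam))
    ∧ ((wtp h τ s x y lam - wtp h τ s x (shift h y ν) lam)
        / (lam⁻¹ * wtp h τ (s - h) x y lam)
      = vm h τ s x y ν) := by
  have hplus := wtp_transfer_ratio_eq_vm hτ hC s x y hlam hν
  exact ⟨hplus.trans (wtm_transfer_ratio_eq_vm hτ hB s x y hlam hν).symm, hplus⟩

/-- The two transfer-coefficient ratios for `w̃⁺` and `w̃⁻` agree and equal `v⁻(ν)`. -/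
theorem transfer_coefficient_minus
    (h : ℂ) (hh : h ≠ 0)
    (τ : ℂ → (ℕ+ → ℂ) → (ℕ+ → ℂ) → ℂ) (hτ : ∀ s x y, τ s x y ≠ 0)
    (hB : FayB h τ) (hC : FayC h τ)
    (s : ℂ) (x y : ℕ+ → ℂ) (lam ν : ℂ) (hlam : lam ≠ 0) (hν : ν ≠ 0) :
    ((wtp h τ s x y lam - wtp h τ s x (shift h y ν) lam)
        / (lam⁻¹ * wtp h τ (s - h) x y lam)
      = (wtm h τ s x y lam - (1 - ν / lam) * wtm h τ s x (shift h y ν) lam)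
        / (lam⁻¹ * wtm h τ (s - h) x y lam))
    ∧ ((wtp h τ s x y lam - wtp h τ s x (shift h y ν) lam)
        / (lam⁻¹ * wtp h τ (s - h) x y lam)
      = vm h τ s x y ν) :=
  transfer_coefficient_minus_general h τ hτ hB hC s x y lam ν hlam hν
end
end
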